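/- Let (X,T) be a topological dynamical system and μ an ergodic T-invariant Borel probability measure on X. Then (X,T) is μ-mean equicontinuous if and only if it is μ-logarithmically mean equicontinuous. -/

import Mathlib

open Filter MeasureTheory Topology

/-- The `n`-th harmonic number `H_n = ∑_{k=1}^n 1/k` as a real number. -/
noncomputable def H (n : ℕ) : ℝ := ∑ k ∈ Finset.range n, (1 : ℝ) / (k + 1)

/-- A Borel probability measure `μ` is `T`-invariant if `μ(T⁻¹B) = μ(B)` for every Borel set. -/
def IsInvariantMeasure {X : Type*} [MetricSpace X] [MeasurableSpace X]
    (T : X → X) (μ : ProbabilityMeasure X) : Prop :=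
  ∀ B : Set X, MeasurableSet B → μ (T ⁻¹' B) = μ B

/-- A `T`-invariant Borel probability measure `μ` is ergodic if every Borel set `B` with
`T⁻¹B = B` satisfies `μ(B) ∈ {0,1}`. -/
def IsErgodicMeasure {X : Type*} [MetricSpace X] [MeasurableSpace X]
    (T : X → X) (μ : ProbabilityMeasure X) : Prop :=
  IsInvariantMeasure T μ ∧
    ∀ B : Set X, MeasurableSet B → T ⁻¹' B = B → μ B = 0 ∨ μ B = 1

/-- `(X,T)` is `μ`-mean equicontinuous if for every `η ∈ (0,1)` there is a Borel set `X_η`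
with `μ(X_η) > η` such that for every `ε > 0` there is `δ > 0` such that `x, y ∈ X_η` with
`d(x,y) < δ` satisfy `limsup_n (1/n) ∑_{k=1}^n d(T^{k-1}x, T^{k-1}y) < ε`. -/
def MuMeanEquicontinuous {X : Type*} [MetricSpace X] [MeasurableSpace X]
    (T : X → X) (μ : ProbabilityMeasure X) : Prop :=
  ∀ η : NNReal, 0 < η → η < 1 →
    ∃ Xη : Set X, MeasurableSet Xη ∧ η < μ Xη ∧
      ∀ ε > (0 : ℝ), ∃ δ > (0 : ℝ), ∀ x ∈ Xη, ∀ y ∈ Xη, dist x y < δ →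
        limsup (fun n : ℕ =>
          (1 / (n : ℝ)) * ∑ k ∈ Finset.range n, dist (T^[k] x) (T^[k] y)) atTop < ε

/-- `(X,T)` is `μ`-logarithmically mean equicontinuous if for every `η ∈ (0,1)` there is a
Borel set `X_η` with `μ(X_η) > η` such that for every `ε > 0` there is `δ > 0` such that
`x, y ∈ X_η` with `d(x,y) < δ` satisfy
`limsup_n (1/H_n) ∑_{k=1}^n (1/k) d(T^{k-1}x, T^{k-1}y) < ε`. -/
def MuLogMeanEquicontinuous {X : Type*} [MetricSpace X] [MeasurableSpace X]
    (T : X → X) (μ : ProbabilityMeasure X) : Prop :=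
  ∀ η : NNReal, 0 < η → η < 1 →
    ∃ Xη : Set X, MeasurableSet Xη ∧ η < μ Xη ∧
      ∀ ε > (0 : ℝ), ∃ δ > (0 : ℝ), ∀ x ∈ Xη, ∀ y ∈ Xη, dist x y < δ →
        limsup (fun n : ℕ =>
          (1 / H n) * ∑ k ∈ Finset.range n, (1 / (k + 1 : ℝ)) * dist (T^[k] x) (T^[k] y))
          atTop < ε

open Finset

/-!
For `μ ⊗ μ`-almost every pair `(x, y)`, the Cesàro means of `d(Tᵏx, Tᵏy)` converge: this is the
pointwise ergodic theorem for the bounded function `d` under `T × T`, which follows from the maximal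
ergodic theorem (Garsia's argument). By Abel summation the logarithmic means are weighted averages
of the Cesàro means with weights `1/(k+1)` of divergent sum, so they converge to the same limit.
Hence the two orbit pseudometrics `limsup (Cesàro means)` and `limsup (logarithmic means)` agree
`μ ⊗ μ`-almost everywhere.

Equicontinuity on a set `K` of large measure passes from one such function to the other: remove
from `K` the null set of points `x` with `D x · ≠ E x ·` on a non-null set, and the null set of
points near which `K` is null. Two close points `x, y` of what remains have a common neighbour
`z ∈ K` with `D x z = E x z` and `D y z = E y z`, and the triangle inequality through `z` concludes.
-/

section RealSequences

variable {u v w : ℕ → ℝ} {C : ℝ}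

theorem isBoundedUnder_le_of_abs_le (hu : ∀ n, |u n| ≤ C) : IsBoundedUnder (· ≤ ·) atTop u :=
  isBoundedUnder_of ⟨C, fun n => (abs_le.1 (hu n)).2⟩

theorem isBoundedUnder_ge_of_abs_le (hu : ∀ n, |u n| ≤ C) : IsBoundedUnder (· ≥ ·) atTop u :=
  isBoundedUnder_of ⟨-C, fun n => (abs_le.1 (hu n)).1⟩

theorem limsup_eq_limsup_of_tendsto_sub (hu : ∀ n, |u n| ≤ C)
    (hv : Tendsto (fun n => v n - u n) atTop (𝓝 0)) : limsup v atTop = limsup u atTop := by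
  have hu₁ := isBoundedUnder_le_of_abs_le hu
  have hu₂ := isBoundedUnder_ge_of_abs_le hu
  rw [show v = u + fun n => v n - u n by funext n; simp]
  refine le_antisymm ?_ ?_
  · simpa [hv.limsup_eq] using limsup_add_le hu₂ hu₁ hv.isBoundedUnder_ge.isCoboundedUnder_le
      hv.isBoundedUnder_le
  · simpa [hv.liminf_eq] using le_limsup_add hu₁ hu₂.isCoboundedUnder_le hv.isBoundedUnder_le
      hv.isBoundedUnder_ge

theorem liminf_eq_liminf_of_tendsto_sub (hu : ∀ n, |u n| ≤ C)
    (hv : Tendsto (fun n => v n - u n) atTop (𝓝 0)) : liminf v atTop = liminf u atTop := by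
  have hu₁ := isBoundedUnder_le_of_abs_le hu
  have hu₂ := isBoundedUnder_ge_of_abs_le hu
  rw [show v = u + fun n => v n - u n by funext n; simp]
  refine le_antisymm ?_ ?_
  · simpa [add_comm u, hv.limsup_eq] using liminf_add_le hv.isBoundedUnder_ge hv.isBoundedUnder_le
      hu₂ hu₁.isCoboundedUnder_ge
  · simpa [hv.liminf_eq] using le_liminf_add hu₂ hu₁ hv.isBoundedUnder_ge
      hv.isBoundedUnder_le.isCoboundedUnder_ge

theorem limsup_le_limsup_add_limsup (hu : ∀ n, |u n| ≤ C) (hv : ∀ n, |v n| ≤ C)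
    (hw : ∀ n, |w n| ≤ C) (h : ∀ n, u n ≤ v n + w n) :
    limsup u atTop ≤ limsup v atTop + limsup w atTop :=
  (limsup_le_limsup (.of_forall h) (isBoundedUnder_ge_of_abs_le hu).isCoboundedUnder_le
    (isBoundedUnder_le_add (isBoundedUnder_le_of_abs_le hv)
      (isBoundedUnder_le_of_abs_le hw))).trans
    (limsup_add_le (isBoundedUnder_ge_of_abs_le hv) (isBoundedUnder_le_of_abs_le hv)
      (isBoundedUnder_ge_of_abs_le hw).isCoboundedUnder_le (isBoundedUnder_le_of_abs_le hw))

end RealSequences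

section MaximalErgodic

variable {Ω : Type*} {S : Ω → Ω} {f : Ω → ℝ} {C : ℝ}

theorem abs_birkhoffSum_le (hfb : ∀ p, |f p| ≤ C) (n : ℕ) (p : Ω) :
    |birkhoffSum S f n p| ≤ n * C :=
  calc |birkhoffSum S f n p| ≤ ∑ k ∈ range n, |f (S^[k] p)| := abs_sum_le_sum_abs _ _
    _ ≤ ∑ _k ∈ range n, C := sum_le_sum fun k _ => hfb _
    _ = n * C := by simp

theorem abs_birkhoffAverage_le (hfb : ∀ p, |f p| ≤ C) (n : ℕ) (p : Ω) :
    |birkhoffAverage ℝ S f n p| ≤ C := by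
  have hC : 0 ≤ C := (abs_nonneg _).trans (hfb p)
  rcases n.eq_zero_or_pos with rfl | hn
  · simpa using hC
  · rw [birkhoffAverage, smul_eq_mul, abs_mul, abs_inv, Nat.abs_cast,
      inv_mul_le_iff₀ (by positivity)]
    exact abs_birkhoffSum_le hfb n p

-- The `k = 0` term makes this `max (0, S₁ f, …, S_N f)`.
noncomputable def birkhoffMax (S : Ω → Ω) (f : Ω → ℝ) (N : ℕ) : Ω → ℝ :=
  (range (N + 1)).sup' nonempty_range_add_one (birkhoffSum S f)

theorem birkhoffSum_le_birkhoffMax {k N : ℕ} (hk : k ≤ N) (p : Ω) :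
    birkhoffSum S f k p ≤ birkhoffMax S f N p := by
  rw [birkhoffMax, Finset.sup'_apply]
  exact le_sup' (fun k => birkhoffSum S f k p) (mem_range_succ_iff.2 hk)

theorem exists_birkhoffSum_eq_birkhoffMax (N : ℕ) (p : Ω) :
    ∃ k ≤ N, birkhoffSum S f k p = birkhoffMax S f N p := by
  obtain ⟨k, hk, h⟩ := exists_mem_eq_sup' nonempty_range_add_one fun k => birkhoffSum S f k p
  exact ⟨k, mem_range_succ_iff.1 hk, by rw [birkhoffMax, Finset.sup'_apply, h]⟩

theorem birkhoffMax_nonneg (N : ℕ) (p : Ω) : 0 ≤ birkhoffMax S f N p := by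
  simpa using birkhoffSum_le_birkhoffMax (S := S) (f := f) N.zero_le p

theorem birkhoffMax_le_succ (N : ℕ) (p : Ω) : birkhoffMax S f N p ≤ birkhoffMax S f (N + 1) p := by
  obtain ⟨k, hk, h⟩ := exists_birkhoffSum_eq_birkhoffMax (S := S) (f := f) N p
  exact h ▸ birkhoffSum_le_birkhoffMax (by omega) p

theorem birkhoffMax_succ_le (N : ℕ) (p : Ω) :
    birkhoffMax S f (N + 1) p ≤ max 0 (f p + birkhoffMax S f N (S p)) := by
  obtain ⟨k, hk, h⟩ := exists_birkhoffSum_eq_birkhoffMax (S := S) (f := f) (N + 1) p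
  rw [← h]
  cases k with
  | zero => simp
  | succ k =>
    rw [birkhoffSum_succ']
    exact le_max_of_le_right (by gcongr; exact birkhoffSum_le_birkhoffMax (by omega) _)

theorem abs_birkhoffMax_le (hfb : ∀ p, |f p| ≤ C) (N : ℕ) (p : Ω) :
    |birkhoffMax S f N p| ≤ N * C := by
  obtain ⟨k, hk, h⟩ := exists_birkhoffSum_eq_birkhoffMax (S := S) (f := f) N p
  have hC : 0 ≤ C := (abs_nonneg _).trans (hfb p)
  rw [← h]
  exact (abs_birkhoffSum_le hfb k p).trans (by gcongr)

theorem birkhoffMax_le_add_birkhoffMax_apply {N : ℕ} {p : Ω} (hp : 0 < birkhoffMax S f N p) :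
    birkhoffMax S f N p ≤ f p + birkhoffMax S f N (S p) := by
  have h := (birkhoffMax_le_succ (S := S) (f := f) N p).trans (birkhoffMax_succ_le N p)
  rcases le_total (f p + birkhoffMax S f N (S p)) 0 with h' | h'
  · exact absurd (h.trans (max_eq_left h').le) hp.not_ge
  · rwa [max_eq_right h'] at h

variable [MeasurableSpace Ω]

theorem measurable_birkhoffSum (hS : Measurable S) (hf : Measurable f) (n : ℕ) :
    Measurable (birkhoffSum S f n) :=
  Finset.measurable_sum _ fun k _ => hf.comp (hS.iterate k)

theorem measurable_birkhoffMax (hS : Measurable S) (hf : Measurable f) (N : ℕ) :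
    Measurable (birkhoffMax S f N) :=
  Finset.measurable_sup' _ fun k _ => measurable_birkhoffSum hS hf k

theorem integrable_of_abs_le {μ : Measure Ω} [IsFiniteMeasure μ] {g : Ω → ℝ} (hg : Measurable g)
    (hgb : ∀ p, |g p| ≤ C) : Integrable g μ :=
  .of_bound hg.aestronglyMeasurable C (ae_of_all _ hgb)

theorem setIntegral_birkhoffMax_pos_nonneg {ν : Measure Ω} [IsFiniteMeasure ν]
    (hS : MeasurePreserving S ν ν) (hf : Measurable f) (hfb : ∀ p, |f p| ≤ C) (N : ℕ) :
    0 ≤ ∫ p in {p | 0 < birkhoffMax S f N p}, f p ∂ν := by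
  set E := {p | 0 < birkhoffMax S f N p}
  have hmeas := measurable_birkhoffMax hS.measurable hf N
  have hM : Integrable (birkhoffMax S f N) ν :=
    integrable_of_abs_le hmeas (abs_birkhoffMax_le hfb N)
  have hMS : Integrable (fun p => birkhoffMax S f N (S p)) ν := hS.integrable_comp_of_integrable hM
  have hpt : ∀ p ∈ E, birkhoffMax S f N p - birkhoffMax S f N (S p) ≤ f p := fun p hp => by
    linarith [birkhoffMax_le_add_birkhoffMax_apply (f := f) hp.out]
  have hoff : ∀ p ∉ E, birkhoffMax S f N p = 0 := fun p hp =>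
    le_antisymm (not_lt.1 hp) (birkhoffMax_nonneg N p)
  calc (0 : ℝ) = ∫ p, birkhoffMax S f N p ∂ν - ∫ p, birkhoffMax S f N (S p) ∂ν := by
        rw [← integral_map hS.measurable.aemeasurable hmeas.aestronglyMeasurable, hS.map_eq,
          sub_self]
    _ ≤ ∫ p in E, birkhoffMax S f N p ∂ν - ∫ p in E, birkhoffMax S f N (S p) ∂ν := by
        rw [setIntegral_eq_integral_of_forall_compl_eq_zero hoff]
        exact sub_le_sub_left (setIntegral_le_integral hMS
          (ae_of_all _ fun p => birkhoffMax_nonneg N (S p))) _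
    _ = ∫ p in E, (birkhoffMax S f N p - birkhoffMax S f N (S p)) ∂ν :=
        (integral_sub hM.integrableOn hMS.integrableOn).symm
    _ ≤ ∫ p in E, f p ∂ν :=
        setIntegral_mono_on (hM.sub hMS).integrableOn (integrable_of_abs_le hf hfb).integrableOn
          (measurableSet_lt measurable_const hmeas) hpt

theorem maximal_ergodic_theorem {ν : Measure Ω} [IsFiniteMeasure ν] (hS : MeasurePreserving S ν ν)
    (hf : Measurable f) (hfb : ∀ p, |f p| ≤ C) :
    0 ≤ ∫ p in {p | ∃ n, 0 < birkhoffSum S f n p}, f p ∂ν := by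
  set E : ℕ → Set Ω := fun N => {p | 0 < birkhoffMax S f N p}
  have hE : ∀ N, MeasurableSet (E N) := fun N =>
    measurableSet_lt measurable_const (measurable_birkhoffMax hS.measurable hf N)
  have hmono : Monotone E := monotone_nat_of_le_succ fun N p (hp : 0 < _) =>
    hp.trans_le (birkhoffMax_le_succ N p)
  have hunion : ⋃ N, E N = {p | ∃ n, 0 < birkhoffSum S f n p} := by
    ext p
    simp only [Set.mem_iUnion, Set.mem_ofPred_eq, E]
    constructor
    · rintro ⟨N, hN⟩
      obtain ⟨k, -, h⟩ := exists_birkhoffSum_eq_birkhoffMax (S := S) (f := f) N p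
      exact ⟨k, h ▸ hN⟩
    · rintro ⟨n, hn⟩
      exact ⟨n, hn.trans_le (birkhoffSum_le_birkhoffMax le_rfl p)⟩
  have h := tendsto_setIntegral_of_monotone hE hmono
    (integrable_of_abs_le (μ := ν) hf hfb).integrableOn
  rw [hunion] at h
  exact ge_of_tendsto' h (setIntegral_birkhoffMax_pos_nonneg hS hf hfb)

end MaximalErgodic

section PointwiseErgodic

variable {Ω : Type*} {S : Ω → Ω} {f : Ω → ℝ} {C : ℝ}

theorem birkhoffSum_indicator {M : Type*} [AddCommMonoid M] {A : Set Ω} (hA : S ⁻¹' A = A)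
    (g : Ω → M) (n : ℕ) : birkhoffSum S (A.indicator g) n = A.indicator (birkhoffSum S g n) := by
  funext p
  have hk : ∀ k, S^[k] p ∈ A ↔ p ∈ A := fun k => by
    induction k with
    | zero => rfl
    | succ k ih => rw [Function.iterate_succ_apply', ← Set.mem_preimage, hA, ih]
  by_cases hp : p ∈ A <;> simp [birkhoffSum, Set.indicator, hk, hp]

theorem limsup_birkhoffAverage_apply (hfb : ∀ p, |f p| ≤ C) (p : Ω) :
    limsup (birkhoffAverage ℝ S f · (S p)) atTop = limsup (birkhoffAverage ℝ S f · p) atTop := by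
  have hbdd : Bornology.IsBounded (Set.range f) :=
    isBounded_iff_forall_norm_le.2 ⟨C, by simpa using hfb⟩
  exact limsup_eq_limsup_of_tendsto_sub (abs_birkhoffAverage_le hfb · p)
    (tendsto_birkhoffAverage_apply_sub_birkhoffAverage' ℝ hbdd S p)

theorem liminf_birkhoffAverage_apply (hfb : ∀ p, |f p| ≤ C) (p : Ω) :
    liminf (birkhoffAverage ℝ S f · (S p)) atTop = liminf (birkhoffAverage ℝ S f · p) atTop := by
  have hbdd : Bornology.IsBounded (Set.range f) :=
    isBounded_iff_forall_norm_le.2 ⟨C, by simpa using hfb⟩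
  exact liminf_eq_liminf_of_tendsto_sub (abs_birkhoffAverage_le hfb · p)
    (tendsto_birkhoffAverage_apply_sub_birkhoffAverage' ℝ hbdd S p)

variable [MeasurableSpace Ω] {ν : Measure Ω} [IsFiniteMeasure ν]

theorem measurable_birkhoffAverage (hS : Measurable S) (hf : Measurable f) (n : ℕ) :
    Measurable (birkhoffAverage ℝ S f n) :=
  (measurable_birkhoffSum hS hf n).const_smul (n : ℝ)⁻¹

theorem mul_measureReal_le_setIntegral (hS : MeasurePreserving S ν ν) (hf : Measurable f)
    (hfb : ∀ p, |f p| ≤ C) {A : Set Ω} (hA : MeasurableSet A) (hAinv : S ⁻¹' A = A) {β : ℝ}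
    (hβ : ∀ p ∈ A, ∃ᶠ n in atTop, β < birkhoffAverage ℝ S f n p) :
    β * ν.real A ≤ ∫ p in A, f p ∂ν := by
  set g := A.indicator fun p => f p - β
  have hg : Measurable g := (hf.sub measurable_const).indicator hA
  have hgb : ∀ p, |g p| ≤ C + |β| := fun p => by
    by_cases hp : p ∈ A
    · simp only [g, Set.indicator_of_mem hp]
      exact (abs_sub _ _).trans (by linarith [hfb p])
    · simpa [g, hp] using add_nonneg ((abs_nonneg _).trans (hfb p)) (abs_nonneg β)
  have hsum : ∀ n, birkhoffSum S g n = A.indicator fun p => birkhoffSum S f n p - n * β :=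
    fun n => by
      rw [birkhoffSum_indicator hAinv]
      congr 1
      funext p
      simp [birkhoffSum, Finset.sum_sub_distrib]
  have hpos : {p | ∃ n, 0 < birkhoffSum S g n p} = A := by
    ext p
    simp only [hsum, Set.mem_ofPred_eq]
    constructor
    · rintro ⟨n, hn⟩
      by_contra hp
      simp [hp] at hn
    · intro hp
      obtain ⟨n, hβn, hn⟩ := ((hβ p hp).and_eventually (eventually_gt_atTop 0)).exists
      rw [birkhoffAverage, smul_eq_mul, lt_inv_mul_iff₀ (by positivity)] at hβn
      exact ⟨n, by simpa [hp] using hβn⟩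
  have h := maximal_ergodic_theorem hS hg hgb
  rw [hpos, setIntegral_congr_fun hA fun p hp => Set.indicator_of_mem hp _,
    integral_sub (integrable_of_abs_le hf hfb).integrableOn
      (integrableOn_const (measure_ne_top ν A)),
    setIntegral_const, smul_eq_mul] at h
  linarith

theorem measure_liminf_lt_lt_limsup_birkhoffAverage (hS : MeasurePreserving S ν ν)
    (hf : Measurable f) (hfb : ∀ p, |f p| ≤ C) {α β : ℝ} (hαβ : α < β) :
    ν {p | liminf (birkhoffAverage ℝ S f · p) atTop < α ∧
      β < limsup (birkhoffAverage ℝ S f · p) atTop} = 0 := by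
  set A := {p | liminf (birkhoffAverage ℝ S f · p) atTop < α ∧
    β < limsup (birkhoffAverage ℝ S f · p) atTop}
  have hav := measurable_birkhoffAverage hS.measurable hf
  have hA : MeasurableSet A := (measurableSet_lt (.liminf hav) measurable_const).inter
    (measurableSet_lt measurable_const (.limsup hav))
  have hAinv : S ⁻¹' A = A := by
    ext p
    simp [A, limsup_birkhoffAverage_apply hfb, liminf_birkhoffAverage_apply hfb]
  have hβ : β * ν.real A ≤ ∫ p in A, f p ∂ν :=
    mul_measureReal_le_setIntegral hS hf hfb hA hAinv fun p hp =>
      frequently_lt_of_lt_limsup (isBoundedUnder_ge_of_abs_le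
        (abs_birkhoffAverage_le hfb · p)).isCoboundedUnder_le hp.2
  have hα : -α * ν.real A ≤ ∫ p in A, -f p ∂ν :=
    mul_measureReal_le_setIntegral hS hf.neg (by simpa using hfb) hA hAinv fun p hp =>
      (frequently_lt_of_liminf_lt (isBoundedUnder_le_of_abs_le
        (abs_birkhoffAverage_le hfb · p)).isCoboundedUnder_ge hp.1).mono fun n hn => by
        simpa [birkhoffAverage_neg] using hn
  rw [integral_neg] at hα
  have hA0 : ν.real A ≤ 0 := by nlinarith
  exact (measureReal_eq_zero_iff (measure_ne_top ν A)).1 (hA0.antisymm measureReal_nonneg)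

theorem ae_tendsto_birkhoffAverage (hS : MeasurePreserving S ν ν) (hf : Measurable f)
    (hfb : ∀ p, |f p| ≤ C) : ∀ᵐ p ∂ν, ∃ c, Tendsto (birkhoffAverage ℝ S f · p) atTop (𝓝 c) := by
  have hrat : ∀ᵐ p ∂ν, ∀ q r : ℚ, (q : ℝ) < r →
      ¬ (liminf (birkhoffAverage ℝ S f · p) atTop < q ∧
        (r : ℝ) < limsup (birkhoffAverage ℝ S f · p) atTop) := by
    refine ae_all_iff.2 fun q => ae_all_iff.2 fun r => ?_
    by_cases hqr : (q : ℝ) < r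
    · filter_upwards [measure_eq_zero_iff_ae_notMem.1
        (measure_liminf_lt_lt_limsup_birkhoffAverage hS hf hfb hqr)] with p hp _ using hp
    · exact ae_of_all _ fun p h => absurd h hqr
  filter_upwards [hrat] with p hp
  have hu₁ := isBoundedUnder_le_of_abs_le (abs_birkhoffAverage_le (S := S) hfb · p)
  have hu₂ := isBoundedUnder_ge_of_abs_le (abs_birkhoffAverage_le (S := S) hfb · p)
  refine ⟨_, tendsto_of_liminf_eq_limsup ?_ rfl hu₁ hu₂⟩
  refine (liminf_le_limsup hu₁ hu₂).antisymm (not_lt.1 fun hlt => ?_)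
  obtain ⟨q, hq, hqr⟩ := exists_rat_btwn hlt
  obtain ⟨r, hqr, hr⟩ := exists_rat_btwn hqr
  exact hp q r (by exact_mod_cast hqr) ⟨hq, hr⟩

end PointwiseErgodic

section LogarithmicMeans

noncomputable def cesaroMean (a : ℕ → ℝ) (n : ℕ) : ℝ := (1 / (n : ℝ)) * ∑ k ∈ range n, a k

noncomputable def logMean (a : ℕ → ℝ) (n : ℕ) : ℝ :=
  (1 / H n) * ∑ k ∈ range n, (1 / (k + 1 : ℝ)) * a k

theorem tendsto_H_atTop : Tendsto H atTop atTop := Real.tendsto_sum_range_one_div_nat_succ_atTop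

theorem H_pos {n : ℕ} (hn : 0 < n) : 0 < H n :=
  sum_pos (fun k _ => by positivity) (nonempty_range_iff.2 hn.ne')

theorem H_nonneg (n : ℕ) : 0 ≤ H n := sum_nonneg fun k _ => by positivity

-- Abel summation, with `k⁻¹ - (k+1)⁻¹ = (k (k+1))⁻¹`.
theorem sum_one_div_succ_mul_eq (a : ℕ → ℝ) (n : ℕ) :
    ∑ k ∈ range n, (1 / (k + 1 : ℝ)) * a k =
      cesaroMean a n + ∑ j ∈ range n, (1 / (j + 1 : ℝ)) * cesaroMean a j := by
  induction n with
  | zero => simp [cesaroMean]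
  | succ n ih =>
    rw [sum_range_succ, ih, sum_range_succ]
    rcases n.eq_zero_or_pos with rfl | hn
    · simp [cesaroMean]
    · have hn : (n : ℝ) ≠ 0 := by positivity
      simp only [cesaroMean, sum_range_succ, Nat.cast_succ]
      field_simp
      ring

theorem tendsto_logMean_of_tendsto_cesaroMean {a : ℕ → ℝ} {c : ℝ}
    (h : Tendsto (cesaroMean a) atTop (𝓝 c)) :
    Tendsto (logMean a) atTop (𝓝 c) := by
  have hw : (fun j : ℕ => (1 / (j + 1 : ℝ)) * (cesaroMean a j - c)) =o[atTop]
      fun j : ℕ => 1 / (j + 1 : ℝ) := by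
    simpa using (Asymptotics.isBigO_refl (fun j : ℕ => 1 / (j + 1 : ℝ)) atTop).mul_isLittleO
      (Asymptotics.isLittleO_one_iff ℝ |>.2 (tendsto_sub_nhds_zero_iff.2 h))
  have hsum := hw.sum_range (fun j => by positivity) tendsto_H_atTop
  have hmean : cesaroMean a =o[atTop] H := (h.isBigO_one ℝ).trans_isLittleO
    ((Asymptotics.isLittleO_one_left_iff ℝ).2 (tendsto_norm_atTop_atTop.comp tendsto_H_atTop))
  have hlog : (fun n => ∑ k ∈ range n, (1 / (k + 1 : ℝ)) * a k - c * H n) =o[atTop] H := by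
    refine (hmean.add hsum).congr_left fun n => ?_
    rw [sum_one_div_succ_mul_eq a n, H, mul_sum, add_sub_assoc, ← sum_sub_distrib]
    simp only [mul_sub, mul_one_div, one_div_mul_eq_div]
  refine tendsto_sub_nhds_zero_iff.1 (hlog.tendsto_div_nhds_zero.congr' ?_)
  filter_upwards [eventually_gt_atTop 0] with n hn
  rw [logMean, one_div_mul_eq_div, sub_div, mul_div_cancel_right₀ _ (H_pos hn).ne']

variable {a b c : ℕ → ℝ} {C : ℝ}

theorem cesaroMean_le_add (h : ∀ k, a k ≤ b k + c k) (n : ℕ) :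
    cesaroMean a n ≤ cesaroMean b n + cesaroMean c n := by
  rw [cesaroMean, cesaroMean, cesaroMean, ← mul_add, ← sum_add_distrib]
  gcongr with k
  exact h k

theorem logMean_le_add (h : ∀ k, a k ≤ b k + c k) (n : ℕ) :
    logMean a n ≤ logMean b n + logMean c n := by
  rw [logMean, logMean, logMean, ← mul_add, ← sum_add_distrib]
  have := H_nonneg n
  gcongr with k
  rw [← mul_add]
  gcongr
  exact h k

theorem abs_cesaroMean_le (ha : ∀ k, |a k| ≤ C) (n : ℕ) : |cesaroMean a n| ≤ C := by
  rcases n.eq_zero_or_pos with rfl | hn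
  · simpa [cesaroMean] using (abs_nonneg _).trans (ha 0)
  · rw [cesaroMean, abs_mul, abs_of_pos (by positivity), one_div_mul_eq_div,
      div_le_iff₀ (by positivity)]
    calc |∑ k ∈ range n, a k| ≤ ∑ k ∈ range n, |a k| := abs_sum_le_sum_abs _ _
      _ ≤ ∑ _k ∈ range n, C := sum_le_sum fun k _ => ha k
      _ = C * n := by simp [mul_comm]

theorem abs_logMean_le (ha : ∀ k, |a k| ≤ C) (n : ℕ) : |logMean a n| ≤ C := by
  rcases n.eq_zero_or_pos with rfl | hn
  · simpa [logMean] using (abs_nonneg _).trans (ha 0)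
  · rw [logMean, abs_mul, abs_of_pos (by have := H_pos hn; positivity), one_div_mul_eq_div,
      div_le_iff₀ (H_pos hn), H, mul_sum]
    calc |∑ k ∈ range n, (1 / (k + 1 : ℝ)) * a k| ≤ ∑ k ∈ range n, |(1 / (k + 1 : ℝ)) * a k| :=
          abs_sum_le_sum_abs _ _
      _ ≤ ∑ k ∈ range n, C * (1 / (k + 1 : ℝ)) := sum_le_sum fun k _ => by
          rw [abs_mul, abs_of_pos (by positivity), mul_comm]
          gcongr
          exact ha k

end LogarithmicMeans

section OrbitDistances

variable {X : Type*} [PseudoMetricSpace X] (T : X → X)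

noncomputable def meanOrbitDist (x y : X) : ℝ :=
  limsup (cesaroMean fun k => dist (T^[k] x) (T^[k] y)) atTop

noncomputable def logMeanOrbitDist (x y : X) : ℝ :=
  limsup (logMean fun k => dist (T^[k] x) (T^[k] y)) atTop

theorem meanOrbitDist_comm (x y : X) : meanOrbitDist T x y = meanOrbitDist T y x := by
  simp only [meanOrbitDist, dist_comm]

theorem logMeanOrbitDist_comm (x y : X) : logMeanOrbitDist T x y = logMeanOrbitDist T y x := by
  simp only [logMeanOrbitDist, dist_comm]

variable [BoundedSpace X]

theorem abs_dist_le_diam (x y : X) : |dist x y| ≤ Metric.diam (Set.univ : Set X) :=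
  (abs_of_nonneg dist_nonneg).trans_le <|
    Metric.dist_le_diam_of_mem BoundedSpace.bounded_univ trivial trivial

theorem meanOrbitDist_triangle (x y z : X) :
    meanOrbitDist T x y ≤ meanOrbitDist T x z + meanOrbitDist T z y :=
  limsup_le_limsup_add_limsup
    (abs_cesaroMean_le fun _ => abs_dist_le_diam _ _)
    (abs_cesaroMean_le fun _ => abs_dist_le_diam _ _)
    (abs_cesaroMean_le fun _ => abs_dist_le_diam _ _)
    (cesaroMean_le_add fun _ => dist_triangle _ _ _)

theorem logMeanOrbitDist_triangle (x y z : X) :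
    logMeanOrbitDist T x y ≤ logMeanOrbitDist T x z + logMeanOrbitDist T z y :=
  limsup_le_limsup_add_limsup
    (abs_logMean_le fun _ => abs_dist_le_diam _ _)
    (abs_logMean_le fun _ => abs_dist_le_diam _ _)
    (abs_logMean_le fun _ => abs_dist_le_diam _ _)
    (logMean_le_add fun _ => dist_triangle _ _ _)

end OrbitDistances

section MeasureEquicontinuity

variable {X : Type*} [PseudoMetricSpace X] [MeasurableSpace X]

-- `MuMeanEquicontinuous T μ` and `MuLogMeanEquicontinuous T μ` unfold to this notion for
-- `D = meanOrbitDist T` and `D = logMeanOrbitDist T` respectively.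
def MuEquicontinuousWrt (μ : ProbabilityMeasure X) (D : X → X → ℝ) : Prop :=
  ∀ η : NNReal, 0 < η → η < 1 →
    ∃ Xη : Set X, MeasurableSet Xη ∧ η < μ Xη ∧
      ∀ ε > (0 : ℝ), ∃ δ > (0 : ℝ), ∀ x ∈ Xη, ∀ y ∈ Xη, dist x y < δ → D x y < ε

theorem measure_setOf_exists_measure_inter_ball_eq_zero [SecondCountableTopology X]
    (μ : Measure X) (K : Set X) :
    μ {x ∈ K | ∃ r > 0, μ (K ∩ Metric.ball x r) = 0} = 0 :=
  measure_null_of_locally_null _ fun _x ⟨_, r, hr, h0⟩ =>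
    ⟨K ∩ Metric.ball _ r, mem_nhdsWithin.2 ⟨_, Metric.isOpen_ball, Metric.mem_ball_self hr,
      fun _y hy => ⟨hy.2.1, hy.1⟩⟩, h0⟩

theorem MuEquicontinuousWrt.of_ae_eq [SecondCountableTopology X] {μ : ProbabilityMeasure X}
    {D E : X → X → ℝ} (hD_triangle : ∀ x y z, D x y ≤ D x z + D z y)
    (hD_comm : ∀ x y, D x y = D y x)
    (hDE : ∀ᵐ p ∂(μ : Measure X).prod μ, D p.1 p.2 = E p.1 p.2) (hE : MuEquicontinuousWrt μ E) :
    MuEquicontinuousWrt μ D := by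
  intro η hη₀ hη₁
  obtain ⟨K, hK, hηK, hKE⟩ := hE η hη₀ hη₁
  set N := {x | ¬ ∀ᵐ y ∂(μ : Measure X), D x y = E x y} ∪
    {x ∈ K | ∃ r > 0, (μ : Measure X) (K ∩ Metric.ball x r) = 0}
  have hN : (μ : Measure X) N = 0 := measure_union_null
    (ae_iff.1 (Measure.ae_ae_of_ae_prod hDE)) (measure_setOf_exists_measure_inter_ball_eq_zero _ K)
  refine ⟨K \ toMeasurable μ N, hK.diff (measurableSet_toMeasurable _ _), ?_, ?_⟩
  · have h : (μ : Measure X) (K \ toMeasurable μ N) = (μ : Measure X) K :=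
      measure_sdiff_null (by rwa [measure_toMeasurable])
    simpa only [ProbabilityMeasure.coeFn_def, h] using hηK
  intro ε hε
  obtain ⟨δ, hδ, hKδ⟩ := hKE (ε / 2) (half_pos hε)
  refine ⟨δ / 2, half_pos hδ, fun x hx y hy hxy => ?_⟩
  have hgood : ∀ w ∈ K \ toMeasurable μ N, ∀ᵐ z ∂(μ : Measure X), D w z = E w z :=
    fun w hw => not_not.1 fun h => hw.2 (subset_toMeasurable _ _ (Or.inl h))
  have hball : (μ : Measure X) (K ∩ Metric.ball x (δ / 2)) ≠ 0 := fun h0 =>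
    hx.2 (subset_toMeasurable _ _ (Or.inr ⟨hx.1, δ / 2, half_pos hδ, h0⟩))
  obtain ⟨z, ⟨hzK, hzx⟩, hxz, hyz⟩ := Measure.exists_mem_of_measure_ne_zero_of_ae hball
    (ae_restrict_of_ae ((hgood x hx).and (hgood y hy)))
  rw [Metric.mem_ball, dist_comm] at hzx
  calc D x y ≤ D x z + D y z := hD_comm z y ▸ hD_triangle x y z
    _ = E x z + E y z := by rw [hxz, hyz]
    _ < ε / 2 + ε / 2 := add_lt_add (hKδ x hx.1 z hzK (by linarith))
        (hKδ y hy.1 z hzK (by linarith [dist_triangle y x z, dist_comm x y]))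
    _ = ε := add_halves ε

end MeasureEquicontinuity

theorem ae_meanOrbitDist_eq_logMeanOrbitDist {X : Type*} [PseudoMetricSpace X] [BoundedSpace X]
    [SecondCountableTopology X] [MeasurableSpace X] [BorelSpace X] {T : X → X} {μ : Measure X}
    [IsFiniteMeasure μ] (hT : MeasurePreserving T μ μ) :
    ∀ᵐ p ∂μ.prod μ, meanOrbitDist T p.1 p.2 = logMeanOrbitDist T p.1 p.2 := by
  filter_upwards [ae_tendsto_birkhoffAverage (hT.prod hT) continuous_dist.measurable
    fun p => abs_dist_le_diam p.1 p.2] with ⟨x, y⟩ ⟨c, hc⟩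
  have hmean : Tendsto (cesaroMean fun k => dist (T^[k] x) (T^[k] y)) atTop (𝓝 c) := by
    convert hc using 2 with n
    simp [cesaroMean, birkhoffAverage, birkhoffSum, Prod.map_iterate]
  rw [meanOrbitDist, logMeanOrbitDist, hmean.limsup_eq,
    (tendsto_logMean_of_tendsto_cesaroMean hmean).limsup_eq]

theorem IsInvariantMeasure.measurePreserving {X : Type*} [MetricSpace X] [MeasurableSpace X]
    {T : X → X} {μ : ProbabilityMeasure X} (h : IsInvariantMeasure T μ) (hT : Measurable T) :
    MeasurePreserving T μ μ :=
  ⟨hT, Measure.ext fun B hB => by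
    rw [Measure.map_apply hT hB, ← ProbabilityMeasure.ennreal_coeFn_eq_coeFn_toMeasure,
      ← ProbabilityMeasure.ennreal_coeFn_eq_coeFn_toMeasure, h B hB]⟩

theorem muMeanEquicontinuous_iff_muLogMeanEquicontinuous_general
    {X : Type*} [MetricSpace X] [CompactSpace X]
    [MeasurableSpace X] [BorelSpace X]
    (T : X → X) (hT : Continuous T)
    (μ : ProbabilityMeasure X) (hμ : IsErgodicMeasure T μ) :
    MuMeanEquicontinuous T μ ↔ MuLogMeanEquicontinuous T μ := by
  have hae := ae_meanOrbitDist_eq_logMeanOrbitDist (hμ.1.measurePreserving hT.measurable)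
  constructor
  · exact MuEquicontinuousWrt.of_ae_eq (logMeanOrbitDist_triangle T) (logMeanOrbitDist_comm T)
      (hae.mono fun _ => Eq.symm)
  · exact MuEquicontinuousWrt.of_ae_eq (meanOrbitDist_triangle T) (meanOrbitDist_comm T) hae

/-- For an ergodic `T`-invariant Borel probability measure `μ`, the system `(X,T)` is
`μ`-mean equicontinuous if and only if it is `μ`-logarithmically mean equicontinuous. -/
theorem muMeanEquicontinuous_iff_muLogMeanEquicontinuous
    {X : Type*} [MetricSpace X] [CompactSpace X] [Nonempty X]
    [MeasurableSpace X] [BorelSpace X]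
    (T : X → X) (hT : Continuous T)
    (μ : ProbabilityMeasure X) (hμ : IsErgodicMeasure T μ) :
    MuMeanEquicontinuous T μ ↔ MuLogMeanEquicontinuous T μ :=
  muMeanEquicontinuous_iff_muLogMeanEquicontinuous_general T hT μ hμ
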